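/- Let w be a word, let k ≥ 2, and for each k-power factor x of w write x = v^{kp} with v primitive and p ≥ 1 (this representation is unique). Then the assignment sending x to the set A(x) = {v^{kp−1}, v^{kp−2}, …, v^{kp−k+2}} has the properties: (i) every element of A(x) is a factor of w and is a power of exponent at least 2; (ii) no element of A(x) is a k-power; (iii) for distinct k-power factors x ≠ x' of w, the sets A(x) and A(x') are disjoint and x ∉ A(x'). -/
import Mathlib


/-- `wpow u t` is the concatenation of `t` copies of the word `u`. -/
def wpow {α : Type*} (u : List α) (t : ℕ) : List α := (List.replicate t u).flatten

/-- A word is primitive if it is nonempty and not a power `u^n` with `n ≥ 2`. -/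
def Primitive {α : Type*} (v : List α) : Prop :=
  v ≠ [] ∧ ∀ (u : List α) (n : ℕ), 2 ≤ n → v ≠ wpow u n

/-- For a `k`-power `x = v^{kp}` (`v` primitive, `p ≥ 1`), the assigned set
`A(x) = {v^{kp-1}, v^{kp-2}, …, v^{kp-k+2}}`. -/
def assignedSet {α : Type*} (v : List α) (k p : ℕ) : Set (List α) :=
  {y | ∃ m : ℕ, k * p - k + 2 ≤ m ∧ m ≤ k * p - 1 ∧ y = wpow v m}

@[simp] lemma wpow_zero {α : Type*} (u : List α) : wpow u 0 = [] := rfl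
lemma wpow_succ {α : Type*} (u : List α) (n : ℕ) : wpow u (n+1) = u ++ wpow u n := by
  simp [wpow, List.replicate_succ]
@[simp] lemma wpow_one {α : Type*} (u : List α) : wpow u 1 = u := by simp [wpow]
lemma wpow_add {α : Type*} (u : List α) (m n : ℕ) :
    wpow u (m+n) = wpow u m ++ wpow u n := by
  induction m with
  | zero => simp
  | succ m ih => rw [Nat.succ_add, wpow_succ, ih, wpow_succ, List.append_assoc]
lemma length_wpow {α : Type*} (u : List α) (n : ℕ) :
    (wpow u n).length = n * u.length := by
  induction n with
  | zero => simp
  | succ n ih => rw [wpow_succ, List.length_append, ih]; ring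
@[simp] lemma wpow_nil {α : Type*} (n : ℕ) : wpow ([] : List α) n = [] := by
  have := length_wpow ([] : List α) n
  simpa using List.length_eq_zero_iff.mp (by simpa using this)
lemma wpow_mul {α : Type*} (u : List α) (m n : ℕ) :
    wpow (wpow u m) n = wpow u (n * m) := by
  induction n with
  | zero => simp
  | succ n ih => rw [wpow_succ, ih, Nat.succ_mul, Nat.add_comm, wpow_add]
lemma wpow_prefix {α : Type*} (u : List α) {m n : ℕ} (h : m ≤ n) :
    wpow u m <+: wpow u n := by
  refine ⟨wpow u (n - m), ?_⟩
  rw [← wpow_add, Nat.add_sub_cancel' h]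

/-- Commuting words are powers of a common word. -/
lemma comm_aux {α : Type*} : ∀ (n : ℕ) (x y : List α), x.length + y.length ≤ n →
    x ++ y = y ++ x → ∃ (z : List α) (i j : ℕ), x = wpow z i ∧ y = wpow z j := by
  intro n
  induction n with
  | zero =>
    intro x y h _
    have hx : x = [] := List.length_eq_zero_iff.mp (by omega)
    have hy : y = [] := List.length_eq_zero_iff.mp (by omega)
    exact ⟨[], 0, 0, by simp [hx], by simp [hy]⟩
  | succ n ih =>
    intro x y hlen hc
    rcases le_total x.length y.length with hle | hle
    · rcases eq_or_ne x [] with rfl | hx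
      · exact ⟨y, 0, 1, by simp, by simp⟩
      · have hxy : x <+: y := by
          have h1 : x <+: y ++ x := hc ▸ List.prefix_append x y
          exact List.prefix_of_prefix_length_le h1 (List.prefix_append y x) hle
        obtain ⟨t, rfl⟩ := hxy
        have hc' : x ++ t = t ++ x := by
          have : x ++ (x ++ t) = x ++ (t ++ x) := by
            simpa [List.append_assoc] using hc
          exact List.append_cancel_left this
        have hxne : 1 ≤ x.length := by
          cases x with
          | nil => exact absurd rfl hx
          | cons a l => simp
        obtain ⟨z, i, j, h1, h2⟩ := ih x t (by
          have := hlen; simp [List.length_append] at this ⊢; omega) hc'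
        exact ⟨z, i, i + j, h1, by rw [wpow_add, h1, h2]⟩
    · rcases eq_or_ne y [] with rfl | hy
      · exact ⟨x, 1, 0, by simp, by simp⟩
      · have hxy : y <+: x := by
          have h1 : y <+: x ++ y := hc ▸ List.prefix_append y x
          exact List.prefix_of_prefix_length_le h1 (List.prefix_append x y) hle
        obtain ⟨t, rfl⟩ := hxy
        have hc' : y ++ t = t ++ y := by
          have : y ++ (y ++ t) = y ++ (t ++ y) := by
            simpa [List.append_assoc] using hc.symm
          exact List.append_cancel_left this
        have hyne : 1 ≤ y.length := by
          cases y with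
          | nil => exact absurd rfl hy
          | cons a l => simp
        obtain ⟨z, i, j, h1, h2⟩ := ih y t (by
          have := hlen; simp [List.length_append] at this ⊢; omega) hc'
        exact ⟨z, i + j, i, by rw [wpow_add, h1, h2], h1⟩

/-- Lyndon–Schützenberger: equal powers implies the roots commute. -/
lemma ls {α : Type*} {x y : List α} {a b : ℕ} (ha : 1 ≤ a) (hb : 1 ≤ b)
    (h : wpow x a = wpow y b) : x ++ y = y ++ x := by
  have hyp : y <+: wpow x (2*a - 1) := by
    have h1 : y <+: wpow y b := by
      refine ⟨wpow y (b-1), ?_⟩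
      have : wpow y b = wpow y (1 + (b-1)) := by congr 1; omega
      rw [this, wpow_add, wpow_one]
    exact (h1.trans (h ▸ wpow_prefix x (by omega) : wpow y b <+: wpow x (2*a-1)))
  have hxp : x <+: wpow y (2*b - 1) := by
    have h1 : x <+: wpow x a := by
      refine ⟨wpow x (a-1), ?_⟩
      have : wpow x a = wpow x (1 + (a-1)) := by congr 1; omega
      rw [this, wpow_add, wpow_one]
    exact (h1.trans (h ▸ wpow_prefix y (by omega) : wpow x a <+: wpow y (2*b-1)))
  have hs : wpow x (2*a) = wpow y (2*b) := by
    have : wpow x (a + a) = wpow y (b + b) := by rw [wpow_add, wpow_add, h]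
    convert this using 2 <;> omega
  have p1 : x ++ y <+: wpow x (2*a) := by
    have : wpow x (2*a) = x ++ wpow x (2*a - 1) := by
      have : wpow x (2*a) = wpow x (1 + (2*a-1)) := by congr 1; omega
      rw [this, wpow_add, wpow_one]
    rw [this]
    obtain ⟨r, hr⟩ := hyp
    exact ⟨r, by rw [List.append_assoc, hr]⟩
  have p2 : y ++ x <+: wpow x (2*a) := by
    rw [hs]
    have : wpow y (2*b) = y ++ wpow y (2*b - 1) := by
      have : wpow y (2*b) = wpow y (1 + (2*b-1)) := by congr 1; omega
      rw [this, wpow_add, wpow_one]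
    rw [this]
    obtain ⟨r, hr⟩ := hxp
    exact ⟨r, by rw [List.append_assoc, hr]⟩
  have hl : (x ++ y).length = (y ++ x).length := by simp [List.length_append]; omega
  rw [List.prefix_iff_eq_take.mp p1, List.prefix_iff_eq_take.mp p2, hl]

/-- Uniqueness of the primitive root representation. -/
lemma prim_unique {α : Type*} {v v' : List α} {m m' : ℕ}
    (hv : Primitive v) (hv' : Primitive v') (hm : 1 ≤ m) (hm' : 1 ≤ m')
    (h : wpow v m = wpow v' m') : v = v' ∧ m = m' := by
  have hc := ls hm hm' h
  obtain ⟨z, i, j, h1, h2⟩ := comm_aux (v.length + v'.length) v v' le_rfl hc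
  have hi1 : i = 1 := by
    rcases Nat.lt_or_ge i 2 with hi | hi
    · interval_cases i
      · exact absurd (by simpa using h1) hv.1
      · rfl
    · exact absurd h1 (hv.2 z i hi)
  have hj1 : j = 1 := by
    rcases Nat.lt_or_ge j 2 with hj | hj
    · interval_cases j
      · exact absurd (by simpa using h2) hv'.1
      · rfl
    · exact absurd h2 (hv'.2 z j hj)
  have hvv : v = v' := by rw [h1, h2, hi1, hj1]
  refine ⟨hvv, ?_⟩
  have hlen := congrArg List.length h
  rw [length_wpow, length_wpow, ← hvv] at hlen
  have hvpos : 0 < v.length := List.length_pos_iff.mpr hv.1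
  exact Nat.eq_of_mul_eq_mul_right hvpos hlen

/-- Every nonempty word is a power of a primitive word. -/
lemma prim_exists_aux {α : Type*} : ∀ (n : ℕ) (z : List α), z.length ≤ n → z ≠ [] →
    ∃ (q : List α) (r : ℕ), Primitive q ∧ 1 ≤ r ∧ z = wpow q r := by
  intro n
  induction n with
  | zero => intro z h hz; exact absurd (List.length_eq_zero_iff.mp (by omega)) hz
  | succ n ih =>
    intro z hlen hz
    by_cases hp : Primitive z
    · exact ⟨z, 1, hp, le_rfl, by simp⟩
    · simp only [Primitive, not_and, not_forall] at hp
      obtain ⟨u, m, hm, heq⟩ := hp hz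
      rw [not_not] at heq
      have hu : u ≠ [] := by
        rintro rfl; rw [heq] at hz; simp at hz
      have hlt : u.length < z.length := by
        have := congrArg List.length heq
        rw [length_wpow] at this
        have hupos : 0 < u.length := List.length_pos_iff.mpr hu
        nlinarith
      obtain ⟨q, r, hq, hr, hur⟩ := ih u (by omega) hu
      exact ⟨q, m * r, hq, by nlinarith, by rw [heq, hur, wpow_mul]⟩

lemma prim_exists {α : Type*} (z : List α) (hz : z ≠ []) :
    ∃ (q : List α) (r : ℕ), Primitive q ∧ 1 ≤ r ∧ z = wpow q r :=
  prim_exists_aux z.length z le_rfl hz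

/-- Let `k ≥ 2` and let `x = v^{kp}` and `x' = v'^{kp'}` be
`k`-power factors of `w` written with primitive roots `v, v'` and `p, p' ≥ 1`. Then:
(i) every element of `A(x)` is a factor of `w` and a power of exponent at least 2;
(ii) no element of `A(x)` is a `k`-power;
(iii) if `x ≠ x'` then `A(x)` and `A(x')` are disjoint and `x ∉ A(x')`. -/
theorem assignedSet_properties {α : Type*} (w : List α) (k : ℕ) (hk : 2 ≤ k)
    (v v' : List α) (p p' : ℕ)
    (hv : Primitive v) (hp : 1 ≤ p) (hx : wpow v (k * p) <:+: w)
    (hv' : Primitive v') (hp' : 1 ≤ p') (hx' : wpow v' (k * p') <:+: w) :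
    (∀ y ∈ assignedSet v k p,
        y <:+: w ∧ ∃ (u : List α) (t : ℕ), u ≠ [] ∧ 2 ≤ t ∧ y = wpow u t) ∧
    (∀ y ∈ assignedSet v k p, ¬ ∃ z : List α, z ≠ [] ∧ y = wpow z k) ∧
    (wpow v (k * p) ≠ wpow v' (k * p') →
      Disjoint (assignedSet v k p) (assignedSet v' k p') ∧
        wpow v (k * p) ∉ assignedSet v' k p') := by
  have hps : p - 1 + 1 = p := by omega
  have hps' : p' - 1 + 1 = p' := by omega
  have hsplit : k * p = k * (p - 1) + k := by
    conv_lhs => rw [← hps]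
    rw [Nat.mul_succ]
  have hsplit' : k * p' = k * (p' - 1) + k := by
    conv_lhs => rw [← hps']
    rw [Nat.mul_succ]
  refine ⟨?_, ?_, ?_⟩
  · rintro y ⟨m, hm1, hm2, rfl⟩
    refine ⟨((wpow_prefix v (show m ≤ k * p by omega)).isInfix).trans hx,
      v, m, hv.1, by omega, rfl⟩
  · rintro y ⟨m, hm1, hm2, rfl⟩ ⟨z, hz, hzk⟩
    obtain ⟨q, r, hq, hr, rfl⟩ := prim_exists z hz
    rw [wpow_mul] at hzk
    obtain ⟨rfl, hm⟩ := prim_unique hv hq (by omega) (Nat.mul_pos (by omega) hr) hzk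
    have h1 : k * r < k * p := by omega
    have h2 : k * (p - 1) < k * r := by omega
    have h3 : r < p := Nat.lt_of_mul_lt_mul_left h1
    have h4 : p - 1 < r := Nat.lt_of_mul_lt_mul_left h2
    omega
  · intro hne
    constructor
    · rw [Set.disjoint_left]
      rintro y ⟨m, hm1, hm2, rfl⟩ ⟨m', hm1', hm2', heq⟩
      obtain ⟨rfl, rfl⟩ := prim_unique hv hv' (by omega) (by omega) heq
      have h1 : k * (p - 1) < k * p' := by omega
      have h2 : k * (p' - 1) < k * p := by omega
      have h3 : p - 1 < p' := Nat.lt_of_mul_lt_mul_left h1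
      have h4 : p' - 1 < p := Nat.lt_of_mul_lt_mul_left h2
      have : p = p' := by omega
      exact hne (by rw [this])
    · rintro ⟨m', hm1', hm2', heq⟩
      obtain ⟨rfl, hm⟩ := prim_unique hv hv' (by omega) (by omega) heq
      have h1 : k * p < k * p' := by omega
      have h2 : k * (p' - 1) < k * p := by omega
      have h3 : p < p' := Nat.lt_of_mul_lt_mul_left h1
      have h4 : p' - 1 < p := Nat.lt_of_mul_lt_mul_left h2
      omega
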